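/- Let m > 2 and let Q be a Finset of functions (Fin m → ZMod 2) → ZMod 4 all of whose elements are bent (i.e., Q is a quaternary constant-amplitude code of length 2^m). Then Q.card < 4 ^ (∑_{j=0}^{(m+1)/2} Nat.choose m j), where (m+1)/2 is natural-number division (equal to ⌈m/2⌉). Equivalently, the rate of Q is strictly less than 2^{1-m} · ∑_{j=0}^{⌈m/2⌉} C(m,j). -/

import Mathlib

/-- The Fourier transform of a `ZMod 4`-valued generalized Boolean function. -/
noncomputable def fourier4 {m : ℕ} (f : (Fin m → ZMod 2) → ZMod 4) (u : Fin m → ZMod 2) : ℂ :=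
  ∑ x : Fin m → ZMod 2, Complex.I ^ (f x).val * (-1 : ℂ) ^ (∑ j, u j * x j).val

/-!
Write `f = a + 2b` and let `(b, a + b)` be its Gray image. Checking the four values of `f x`
gives `2 i^f = (1 + i)(-1)^b + (1 - i)(-1)^(a+b)`, so `|2 f̂(u)|² = 2 (W_b(u)² + W_{a+b}(u)²)`
and bentness of `f` becomes `W_b(u)² + W_{a+b}(u)² = 2^(m+1)` for the integer Walsh
transforms. Descending by 2 on this sum of two squares, every Walsh value is divisible by
`2^⌈m/2⌉`, and equals `±2^(m/2)` when `m` is even. Poisson summation writes the sum of the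
Walsh transform over the face of the face orthogonal to `S` as `2^(m-|S|) (2^|S| - 2N)`, where
`N ≡ anf(S) (mod 2)` counts the ones on the face `S`; the divisibility then kills every ANF
coefficient of `b` and `a + b` of degree `|S| > ⌈m/2⌉`. So a bent `f` is determined by two
bits per monomial of degree at most `⌈m/2⌉`, and these bits are not all zero since the zero
function is not bent.
-/

open Finset

lemma Int.even_of_sq_add_sq_eq_four_mul {x y c : ℤ} (h : x ^ 2 + y ^ 2 = 4 * c) : Even x := by
  by_contra hx
  have hx2 := Int.sq_mod_four_eq_one_of_odd (Int.not_even_iff_odd.1 hx)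
  rcases Int.even_or_odd y with ⟨b, rfl⟩ | hy
  · have : (b + b) ^ 2 = 4 * b ^ 2 := by ring
    omega
  · have := Int.sq_mod_four_eq_one_of_odd hy
    omega

lemma Int.exists_eq_two_pow_mul_of_sq_add_sq_eq_four_pow_mul {x y c : ℤ} (s : ℕ)
    (h : x ^ 2 + y ^ 2 = 4 ^ s * c) :
    ∃ a b, x = 2 ^ s * a ∧ y = 2 ^ s * b ∧ a ^ 2 + b ^ 2 = c := by
  induction s generalizing x y with
  | zero => exact ⟨x, y, by simp, by simp, by simpa using h⟩
  | succ s ih =>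
    have h' : x ^ 2 + y ^ 2 = 4 * (4 ^ s * c) := by rw [h]; ring
    obtain ⟨x', rfl⟩ := Int.even_of_sq_add_sq_eq_four_mul h'
    obtain ⟨y', rfl⟩ := Int.even_of_sq_add_sq_eq_four_mul ((add_comm _ _).trans h')
    obtain ⟨a, b, rfl, rfl, hab⟩ := ih (x := x') (y := y') (by linarith)
    exact ⟨a, b, by ring, by ring, hab⟩

lemma Int.eq_one_or_eq_neg_one_of_sq_add_sq_eq_two {a b : ℤ} (h : a ^ 2 + b ^ 2 = 2) :
    a = 1 ∨ a = -1 := by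
  have ha : -1 ≤ a ∧ a ≤ 1 := by constructor <;> nlinarith [sq_nonneg b]
  have hb : -1 ≤ b ∧ b ≤ 1 := by constructor <;> nlinarith [sq_nonneg a]
  obtain ⟨ha₁, ha₂⟩ := ha
  obtain ⟨hb₁, hb₂⟩ := hb
  interval_cases a <;> interval_cases b <;> simp_all

lemma two_mul_dvd_sum_sub_card_mul {α : Type*} {s : Finset α} {f : α → ℤ} {c : ℤ}
    (h : ∀ a ∈ s, f a = c ∨ f a = -c) : 2 * c ∣ ∑ a ∈ s, f a - #s * c := by
  rw [← nsmul_eq_mul, ← sum_const, ← sum_sub_distrib]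
  refine dvd_sum fun a ha => ?_
  rcases h a ha with h | h <;> rw [h]
  · simp
  · exact ⟨-1, by ring⟩

def signChar : AddChar (ZMod 2) ℤ where
  toFun s := (-1) ^ s.val
  map_zero_eq_one' := rfl
  map_add_eq_mul' := by decide

lemma signChar_apply (s : ZMod 2) : signChar s = (-1) ^ s.val := rfl

lemma signChar_sum {ι : Type*} (s : Finset ι) (a : ι → ZMod 2) :
    signChar (∑ i ∈ s, a i) = ∏ i ∈ s, signChar (a i) :=
  map_prod signChar.toMonoidHom (fun i => Multiplicative.ofAdd (a i)) s

lemma signChar_eq_one_sub_two_mul_val (s : ZMod 2) : signChar s = 1 - 2 * s.val := by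
  fin_cases s <;> rfl

lemma sum_signChar_mul (c : ZMod 2) : ∑ a, signChar (a * c) = if c = 0 then 2 else 0 := by
  fin_cases c <;> decide

section BooleanCube

variable {ι : Type*} [Fintype ι] [DecidableEq ι]

def face (S : Finset ι) : Finset (ι → ZMod 2) :=
  Fintype.piFinset fun j => if j ∈ S then univ else {0}

lemma mem_face {S : Finset ι} {x : ι → ZMod 2} : x ∈ face S ↔ ∀ j ∉ S, x j = 0 := by
  simp only [face, Fintype.mem_piFinset]
  refine forall_congr' fun j => ?_
  split_ifs with hj <;> simp [hj]

lemma card_face (S : Finset ι) : #(face S) = 2 ^ #S := by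
  simp [face, apply_ite card, prod_ite_mem]

lemma sum_face_signChar_dotProduct (T : Finset ι) (x : ι → ZMod 2) :
    ∑ u ∈ face T, signChar (u ⬝ᵥ x) = if x ∈ face Tᶜ then 2 ^ #T else 0 := by
  calc ∑ u ∈ face T, signChar (u ⬝ᵥ x)
      = ∏ j, ∑ a ∈ (if j ∈ T then univ else {0}), signChar (a * x j) := by
        simp only [prod_univ_sum, dotProduct, signChar_sum]; rfl
    _ = ∏ j ∈ T, if x j = 0 then 2 else 0 := by
        rw [← univ_inter T, ← prod_ite_mem]
        refine prod_congr rfl fun j _ => ?_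
        split_ifs <;> simp_all [sum_signChar_mul]
    _ = _ := by
        rw [prod_ite_zero, prod_const]
        simp [mem_face]

def walsh (p : (ι → ZMod 2) → ZMod 2) (u : ι → ZMod 2) : ℤ :=
  ∑ x, signChar (p x + u ⬝ᵥ x)

lemma sum_face_compl_walsh (p : (ι → ZMod 2) → ZMod 2) (S : Finset ι) :
    ∑ u ∈ face Sᶜ, walsh p u = 2 ^ #Sᶜ * ∑ x ∈ face S, signChar (p x) := by
  calc ∑ u ∈ face Sᶜ, walsh p u
      = ∑ x, signChar (p x) * ∑ u ∈ face Sᶜ, signChar (u ⬝ᵥ x) := by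
        simp only [walsh, AddChar.map_add_eq_mul, mul_sum]
        exact sum_comm
    _ = ∑ x with x ∈ face S, 2 ^ #Sᶜ * signChar (p x) := by
        simp [sum_face_signChar_dotProduct, mul_comm]
    _ = _ := by simp [mul_sum]

variable {M : Type*}

/-- `anf p S` is the coefficient of the monomial `∏ j ∈ S, x j` in the algebraic normal form
of `p`. -/
def anf [AddCommMonoid M] : ((ι → ZMod 2) → M) →+ (Finset ι → M) where
  toFun p S := ∑ x ∈ face S, p x
  map_zero' := by ext; simp
  map_add' p q := by ext; simp [sum_add_distrib]

lemma anf_apply [AddCommMonoid M] (p : (ι → ZMod 2) → M) (S : Finset ι) :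
    anf p S = ∑ x ∈ face S, p x := rfl

lemma eq_zero_of_anf_eq_zero [AddCommMonoid M] {p : (ι → ZMod 2) → M} (h : anf p = 0) :
    p = 0 := by
  suffices ∀ S, ∀ x ∈ face S, p x = 0 from funext fun x => this univ x (by simp [mem_face])
  intro S
  induction S using Finset.strongInduction with
  | H S ih =>
    have below : ∀ y ∈ face S, (∃ j ∈ S, y j = 0) → p y = 0 := by
      rintro y hy ⟨j, hj, hyj⟩
      refine ih (S.erase j) (erase_ssubset hj) y (mem_face.2 fun i hi => ?_)
      by_cases hij : i = j
      · rwa [hij]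
      · exact mem_face.1 hy i fun hiS => hi (mem_erase.2 ⟨hij, hiS⟩)
    intro x hx
    by_cases hxS : ∃ j ∈ S, x j = 0
    · exact below x hx hxS
    push Not at hxS
    -- the other points of the face lie in a face of smaller dimension
    have others : ∑ y ∈ (face S).erase x, p y = 0 := by
      refine sum_eq_zero fun y hy => below y (mem_of_mem_erase hy) ?_
      by_contra! hyS
      refine ne_of_mem_erase hy (funext fun j => ?_)
      by_cases hj : j ∈ S
      · have nonzero_eq : ∀ a b : ZMod 2, a ≠ 0 → b ≠ 0 → a = b := by decide
        exact nonzero_eq _ _ (hyS j hj) (hxS j hj)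
      · rw [mem_face.1 (mem_of_mem_erase hy) j hj, mem_face.1 hx j hj]
    have := congrFun h S
    rwa [anf_apply, ← add_sum_erase _ _ hx, others, add_zero] at this

lemma anf_injective [AddCommGroup M] : Function.Injective (anf : ((ι → ZMod 2) → M) → _) :=
  (injective_iff_map_eq_zero (anf (ι := ι) (M := M))).2 fun _ => eq_zero_of_anf_eq_zero

lemma anf_eq_zero_of_two_pow_dvd {p : (ι → ZMod 2) → ZMod 2} {S : Finset ι} (hS : 2 ≤ #S)
    (h : 2 ^ (#Sᶜ + 2) ∣ ∑ u ∈ face Sᶜ, walsh p u) : anf p S = 0 := by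
  set N := ∑ x ∈ face S, (p x).val
  have anf_eq : anf p S = (N : ZMod 2) := by simp [N, anf_apply]
  have sum_signChar : ∑ x ∈ face S, signChar (p x) = 2 ^ #S - 2 * N := by
    simp [N, signChar_eq_one_sub_two_mul_val, sum_sub_distrib, card_face, mul_sum]
  rw [sum_face_compl_walsh, sum_signChar, pow_add, mul_dvd_mul_iff_left (by positivity)] at h
  have four_dvd : (4 : ℤ) ∣ 2 ^ #S := by
    obtain ⟨k, hk⟩ := Nat.exists_eq_add_of_le hS
    exact ⟨2 ^ k, by rw [hk, pow_add]; norm_num⟩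
  have : (2 : ℤ) ∣ N := by omega
  rw [anf_eq, ZMod.natCast_eq_zero_iff]
  exact_mod_cast this

lemma anf_eq_zero_of_walsh_sq_add_sq {p : (ι → ZMod 2) → ZMod 2} (hι : 2 < Fintype.card ι)
    (hW : ∀ u, ∃ y : ℤ, walsh p u ^ 2 + y ^ 2 = 2 ^ (Fintype.card ι + 1))
    {S : Finset ι} (hS : (Fintype.card ι + 1) / 2 < #S) : anf p S = 0 := by
  have hSc := card_compl S
  refine anf_eq_zero_of_two_pow_dvd (by omega) ?_
  obtain ⟨s, hs | hs⟩ := Nat.even_or_odd' (Fintype.card ι)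
  · -- the `2 ^ #Sᶜ` Walsh values `±2 ^ s` add up to a multiple of `2 ^ (s + 1)`
    have hpm : ∀ u ∈ face Sᶜ, walsh p u = 2 ^ s ∨ walsh p u = -2 ^ s := by
      intro u _
      obtain ⟨y, hy⟩ := hW u
      obtain ⟨a, b, hwa, -, hab⟩ :=
        Int.exists_eq_two_pow_mul_of_sq_add_sq_eq_four_pow_mul s (c := 2)
          (by rw [hy, hs, pow_succ, pow_mul]; norm_num)
      rcases Int.eq_one_or_eq_neg_one_of_sq_add_sq_eq_two hab with rfl | rfl <;> simp [hwa]
    have h₁ := two_mul_dvd_sum_sub_card_mul hpm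
    rw [card_face] at h₁
    push_cast at h₁
    have h₂ : (2 : ℤ) ^ (#Sᶜ + 2) ∣ 2 * 2 ^ s := by
      rw [← pow_succ']; exact pow_dvd_pow 2 (by omega)
    have h₃ : (2 : ℤ) ^ (#Sᶜ + 2) ∣ 2 ^ #Sᶜ * 2 ^ s := by
      rw [← pow_add]; exact pow_dvd_pow 2 (by omega)
    simpa using dvd_add (h₂.trans h₁) h₃
  · refine dvd_sum fun u _ => ?_
    obtain ⟨y, hy⟩ := hW u
    obtain ⟨a, -, hwa, -⟩ :=
      Int.exists_eq_two_pow_mul_of_sq_add_sq_eq_four_pow_mul (s + 1) (c := 1)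
        (by rw [hy, hs, show 2 * s + 1 + 1 = 2 * (s + 1) by ring, pow_mul]; norm_num)
    rw [hwa]
    exact (pow_dvd_pow 2 (by omega)).mul_right a

end BooleanCube

lemma card_subtype_card_le_eq_sum_choose (ι : Type*) [Fintype ι] (d : ℕ) :
    Fintype.card {S : Finset ι // #S ≤ d} = ∑ j ∈ range (d + 1), (Fintype.card ι).choose j := by
  rw [Fintype.card_subtype, card_eq_sum_card_fiberwise (f := card) (t := range (d + 1))
    (fun S hS => by simpa [Nat.lt_add_one_iff] using hS)]
  refine sum_congr rfl fun j hj => ?_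
  show _ = (#(univ : Finset ι)).choose j
  rw [← card_powersetCard, powersetCard_eq_filter, powerset_univ, filter_filter]
  congr 1
  refine filter_congr fun S _ => ?_
  have := mem_range.1 hj
  omega

open Complex

def gray : ZMod 4 → ZMod 2 × ZMod 2 := ![(0, 0), (0, 1), (1, 1), (1, 0)]

lemma gray_injective : Function.Injective gray := by decide

lemma gray_zero : gray 0 = 0 := rfl

lemma two_mul_I_pow_val (z : ZMod 4) :
    2 * I ^ z.val = (1 + I) * signChar (gray z).1 + (1 - I) * signChar (gray z).2 := by
  obtain ⟨h, h₁, h₂⟩ | ⟨h, h₁, h₂⟩ | ⟨h, h₁, h₂⟩ | ⟨h, h₁, h₂⟩ :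
      z.val = 0 ∧ (gray z).1.val = 0 ∧ (gray z).2.val = 0 ∨
      z.val = 1 ∧ (gray z).1.val = 0 ∧ (gray z).2.val = 1 ∨
      z.val = 2 ∧ (gray z).1.val = 1 ∧ (gray z).2.val = 1 ∨
      z.val = 3 ∧ (gray z).1.val = 1 ∧ (gray z).2.val = 0 := by
    revert z; decide
  all_goals norm_num [signChar_apply, h, h₁, h₂, pow_succ, Complex.ext_iff]

variable {m : ℕ}

lemma two_mul_fourier4 (f : (Fin m → ZMod 2) → ZMod 4) (u : Fin m → ZMod 2) :
    2 * fourier4 f u = (1 + I) * walsh (fun x => (gray (f x)).1) u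
      + (1 - I) * walsh (fun x => (gray (f x)).2) u := by
  have sign_dot : ∀ x, (-1 : ℂ) ^ (∑ j, u j * x j).val = signChar (u ⬝ᵥ x) := by
    intro x; simp [signChar_apply, dotProduct]
  simp only [fourier4, walsh, mul_sum, ← mul_assoc, sign_dot, two_mul_I_pow_val,
    AddChar.map_add_eq_mul, Int.cast_sum, Int.cast_mul, add_mul, sum_add_distrib]

lemma normSq_one_add_I_mul_add_one_sub_I_mul (a b : ℤ) :
    normSq ((1 + I) * a + (1 - I) * b) = 2 * (a ^ 2 + b ^ 2) := by
  have : (1 + I) * a + (1 - I) * b = ((a + b : ℝ) : ℂ) + ((a - b : ℝ) : ℂ) * I := by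
    push_cast; ring
  rw [this, normSq_add_mul_I]
  ring

def IsBent (f : (Fin m → ZMod 2) → ZMod 4) : Prop :=
  ∀ u, normSq (fourier4 f u) = 2 ^ m

lemma IsBent.walsh_sq_add_sq {f : (Fin m → ZMod 2) → ZMod 4} (hf : IsBent f)
    (u : Fin m → ZMod 2) :
    walsh (fun x => (gray (f x)).1) u ^ 2 + walsh (fun x => (gray (f x)).2) u ^ 2
      = 2 ^ (m + 1) := by
  have h := congrArg normSq (two_mul_fourier4 f u)
  rw [normSq_mul, hf u, normSq_one_add_I_mul_add_one_sub_I_mul] at h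
  have h2 : normSq 2 = 4 := by norm_num [normSq]
  rw [h2] at h
  have : (walsh (fun x => (gray (f x)).1) u : ℝ) ^ 2
      + (walsh (fun x => (gray (f x)).2) u : ℝ) ^ 2 = 2 ^ (m + 1) := by
    rw [pow_succ (2 : ℝ) m]; linarith
  exact_mod_cast this

lemma IsBent.anf_gray_comp_eq_zero {f : (Fin m → ZMod 2) → ZMod 4} (hf : IsBent f) (hm : 2 < m)
    {S : Finset (Fin m)} (hS : (m + 1) / 2 < #S) : anf (gray ∘ f) S = 0 := by
  have hm' : 2 < Fintype.card (Fin m) := by simpa using hm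
  have hS' : (Fintype.card (Fin m) + 1) / 2 < #S := by simpa using hS
  have h₁ := anf_eq_zero_of_walsh_sq_add_sq hm'
    (fun u => ⟨_, by simpa using hf.walsh_sq_add_sq u⟩) hS'
  have h₂ := anf_eq_zero_of_walsh_sq_add_sq hm'
    (fun u => ⟨_, by simpa [add_comm] using hf.walsh_sq_add_sq u⟩) hS'
  simp only [anf_apply] at h₁ h₂ ⊢
  exact Prod.ext (by simpa [Prod.fst_sum] using h₁) (by simpa [Prod.snd_sum] using h₂)

lemma not_isBent_zero (hm : 0 < m) : ¬ IsBent (0 : (Fin m → ZMod 2) → ZMod 4) := by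
  intro h
  have h₀ : fourier4 (0 : (Fin m → ZMod 2) → ZMod 4) 0 = 2 ^ m := by simp [fourier4]
  have := h 0
  rw [h₀, map_pow, normSq_ofNat] at this
  linarith [pow_lt_pow_left₀ (by norm_num : (2 : ℝ) < 2 * 2) (by norm_num) hm.ne']

/-- Rate bound for quaternary constant-amplitude codes: a code of length `2^m`, `m > 2`,
all of whose words are bent, has fewer than `4^(∑_{j ≤ ⌈m/2⌉} C(m,j))` codewords. -/
theorem stmt5 (m : ℕ) (hm : 2 < m) (Q : Finset ((Fin m → ZMod 2) → ZMod 4))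
    (hQ : ∀ f ∈ Q, ∀ u, Complex.normSq (fourier4 f u) = 2 ^ m) :
    Q.card < 4 ^ (∑ j ∈ Finset.range ((m + 1) / 2 + 1), Nat.choose m j) := by
  set d := (m + 1) / 2
  have hdeg : ∀ f ∈ insert 0 Q, ∀ S : Finset (Fin m), d < #S → anf (gray ∘ f) S = 0 := by
    intro f hf S hS
    rcases mem_insert.1 hf with rfl | hf
    · simp [anf_apply, gray_zero]
    · exact IsBent.anf_gray_comp_eq_zero (hQ f hf) hm hS
  let code (f : (Fin m → ZMod 2) → ZMod 4) (S : {S : Finset (Fin m) // #S ≤ d}) :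
      ZMod 2 × ZMod 2 := anf (gray ∘ f) S
  have hcode : Set.InjOn code ↑(insert 0 Q) := by
    intro f hf g hg hfg
    refine gray_injective.comp_left (anf_injective (funext fun S => ?_))
    by_cases hS : #S ≤ d
    · exact congrFun hfg ⟨S, hS⟩
    · rw [hdeg f hf S (by omega), hdeg g hg S (by omega)]
  calc Q.card < #(insert 0 Q) :=
        card_lt_card (ssubset_insert fun h => not_isBent_zero (by omega) (hQ 0 h))
    _ ≤ Fintype.card ({S : Finset (Fin m) // #S ≤ d} → ZMod 2 × ZMod 2) :=
      card_le_card_of_injOn code (fun _ _ => mem_univ _) hcode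
    _ = _ := by rw [Fintype.card_fun, card_subtype_card_le_eq_sum_choose, Fintype.card_fin]; rfl
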